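/- arXiv:2211.03722 — 3 statements merged into one kernel-verified Lean document; each statement's English description precedes it below -/
import Mathlib

section
/- Let a ∈ O_L and let (F_m)_{m≥0} be a sequence in Λ that is norm-compatible for a. Then for every m ≥ 1 there exist u, v ∈ Λ such that C_m·C_{m−1}···C_1·(u, v)ᵀ = (F_m, −Φ_m·F_{m−1})ᵀ, the equality holding exactly in Λ² (not merely as a congruence). (This is the exact solvability (3.4) established in the proof of Theorem 3.3 of the paper.) -/
open PowerSeries

/-- `ω_m = (1+X)^{p^m} − 1`. -/
noncomputable def omegaPS (p : ℕ) (R : Type*) [CommRing R] (m : ℕ) : PowerSeries R :=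
  (1 + PowerSeries.X) ^ (p ^ m) - 1

/-- `Φ_m = Σ_{i<p} (1+X)^{i·p^{m−1}}` (meaningful for `m ≥ 1`). -/
noncomputable def PhiPS (p : ℕ) (R : Type*) [CommRing R] (m : ℕ) : PowerSeries R :=
  ∑ i ∈ Finset.range p, (1 + PowerSeries.X) ^ (i * p ^ (m - 1))

/-- The matrix `C_j = ((a, 1), (−Φ_j, 0))`. -/
noncomputable def Cmat (p : ℕ) (R : Type*) [CommRing R] (a : R) (j : ℕ) :
    Matrix (Fin 2) (Fin 2) (PowerSeries R) :=
  !![PowerSeries.C a, 1; -(PhiPS p R j), 0]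

/-- `H_m = C_m · C_{m−1} ⋯ C_1` (with `H_0 = 1`). -/
noncomputable def Hmat (p : ℕ) (R : Type*) [CommRing R] (a : R) :
    ℕ → Matrix (Fin 2) (Fin 2) (PowerSeries R)
  | 0 => 1
  | m + 1 => Cmat p R a (m + 1) * Hmat p R a m

/-- A sequence `(F_m)_{m≥0}` in `Λ` is norm-compatible for `a` if
`F_{m+1} ≡ a·F_m − Φ_m·F_{m−1} (mod ω_m·Λ)` for every `m ≥ 1`. -/
def NormCompat (p : ℕ) (R : Type*) [CommRing R] (a : R) (F : ℕ → PowerSeries R) : Prop :=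
  ∀ m : ℕ, 1 ≤ m →
    omegaPS p R m ∣ (F (m + 1) - (PowerSeries.C a * F m - PhiPS p R m * F (m - 1)))

/-! Since `det C_j = Φ_j`, the determinant of `H_m` is `Φ_m ⋯ Φ_1 = ω_m / ω_0`, so by the adjugate
`H_m` maps onto `ω_m · Λ²`. Hence a solution of `H_m (u, v)ᵀ = (F_m, y)ᵀ` can be corrected to one
for any `y' ≡ y (mod ω_m)`. By induction, solve `H_m (u, v)ᵀ = (F_m, −Φ_m F_{m−1})ᵀ`, correct the
second entry to `F_{m+1} − a F_m` using norm-compatibility, and apply `C_{m+1}`. -/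

section

variable (p : ℕ) (R : Type*) [CommRing R]

lemma omegaPS_succ (m : ℕ) : omegaPS p R (m + 1) = PhiPS p R (m + 1) * omegaPS p R m := by
  have hpow (i : ℕ) : (1 + X (R := R)) ^ (i * p ^ (m + 1 - 1)) = ((1 + X) ^ p ^ m) ^ i := by
    rw [Nat.add_sub_cancel, mul_comm, pow_mul]
  simp only [omegaPS, PhiPS, hpow]
  rw [geom_sum_mul, ← pow_mul, ← pow_succ]

lemma det_Cmat (a : R) (j : ℕ) : (Cmat p R a j).det = PhiPS p R j := by
  simp [Cmat, Matrix.det_fin_two_of]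

lemma det_Hmat_mul_omegaPS_zero (a : R) (m : ℕ) :
    (Hmat p R a m).det * omegaPS p R 0 = omegaPS p R m := by
  induction m with
  | zero => simp [Hmat]
  | succ n ih => rw [omegaPS_succ, Hmat, Matrix.det_mul, det_Cmat, ← ih, mul_assoc]

lemma exists_Hmat_mulVec_eq_omegaPS_smul (a : R) (m : ℕ) (w : Fin 2 → PowerSeries R) :
    ∃ v, (Hmat p R a m).mulVec v = omegaPS p R m • w := by
  refine ⟨(Hmat p R a m).adjugate.mulVec (omegaPS p R 0 • w), ?_⟩
  rw [Matrix.mulVec_mulVec, Matrix.mul_adjugate, Matrix.smul_mulVec, Matrix.one_mulVec,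
    smul_smul, det_Hmat_mul_omegaPS_zero]

lemma Cmat_mulVec (a : R) (j : ℕ) (x y : PowerSeries R) :
    (Cmat p R a j).mulVec ![x, y] = ![C a * x + y, -(PhiPS p R j * x)] := by
  ext i
  fin_cases i <;> simp [Cmat, Matrix.mulVec, dotProduct]

lemma exists_Hmat_mulVec_eq_of_omegaPS_dvd_sub (a : R) (m : ℕ) {u v x y y' : PowerSeries R}
    (huv : (Hmat p R a m).mulVec ![u, v] = ![x, y]) (hy : omegaPS p R m ∣ y' - y) :
    ∃ u' v', (Hmat p R a m).mulVec ![u', v'] = ![x, y'] := by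
  obtain ⟨g, hg⟩ := hy
  obtain ⟨w, hw⟩ := exists_Hmat_mulVec_eq_omegaPS_smul p R a m ![0, g]
  refine ⟨u + w 0, v + w 1, ?_⟩
  have hsum : ![u + w 0, v + w 1] = ![u, v] + w := by
    ext i
    fin_cases i <;> rfl
  rw [hsum, Matrix.mulVec_add, huv, hw]
  ext i
  fin_cases i
  · simp
  · simp [← hg]

end

theorem exact_solvability_general
    (p : ℕ)
    (𝕆 : Type*) [CommRing 𝕆]
    (a : 𝕆) (F : ℕ → PowerSeries 𝕆) (hF : NormCompat p 𝕆 a F) :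
    ∀ m : ℕ, 1 ≤ m → ∃ u v : PowerSeries 𝕆,
      (Hmat p 𝕆 a m).mulVec ![u, v] = ![F m, -(PhiPS p 𝕆 m * F (m - 1))] := by
  intro m hm
  induction m, hm using Nat.le_induction with
  | base =>
    refine ⟨F 0, F 1 - C a * F 0, ?_⟩
    rw [Hmat, Hmat, Matrix.mul_one, Cmat_mulVec]
    simp
  | succ n hn ih =>
    obtain ⟨u, v, huv⟩ := ih
    have hcongr : omegaPS p 𝕆 n ∣ (F (n + 1) - C a * F n) - -(PhiPS p 𝕆 n * F (n - 1)) := by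
      convert hF n hn using 1
      ring
    obtain ⟨u', v', huv'⟩ := exists_Hmat_mulVec_eq_of_omegaPS_dvd_sub p 𝕆 a n huv hcongr
    refine ⟨u', v', ?_⟩
    rw [Hmat, ← Matrix.mulVec_mulVec, huv', Cmat_mulVec]
    simp

/-- if `(F_m)` is norm-compatible for `a`, then for every `m ≥ 1` there
exist `u, v ∈ Λ` with `C_m·C_{m−1}⋯C_1·(u,v)ᵀ = (F_m, −Φ_m·F_{m−1})ᵀ`, exactly in `Λ²`. -/
theorem exact_solvability
    (p : ℕ) (hp : p.Prime) (hp5 : 5 ≤ p)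
    (𝕆 : Type*) [CommRing 𝕆] [IsDomain 𝕆] [IsDiscreteValuationRing 𝕆] [CharZero 𝕆]
    (ϖ : 𝕆) (hϖ : Irreducible ϖ) (hpϖ : ϖ ∣ (p : 𝕆))
    (a : 𝕆) (F : ℕ → PowerSeries 𝕆) (hF : NormCompat p 𝕆 a F) :
    ∀ m : ℕ, 1 ≤ m → ∃ u v : PowerSeries 𝕆,
      (Hmat p 𝕆 a m).mulVec ![u, v] = ![F m, -(PhiPS p 𝕆 m * F (m - 1))] :=
  exact_solvability_general p 𝕆 a F hF
end

section
/- (Computation from the proof of Proposition 4.9 of the paper, over Λ.) Let a ∈ O_L with ϖ ∣ a, let (F_m)_{m≥0} be a sequence in Λ that is norm-compatible for a, and let (F^♯, F^♭) ∈ Λ × Λ be the unique pair with H_m·(F^♯, F^♭)ᵀ ≡ (F_m, −Φ_m·F_{m−1})ᵀ (mod ω_m·Λ) for all m ≥ 1 (Theorem 3.3). Then F^♯ ≡ F_0 (mod X·Λ) and F^♭ ≡ F_1 − a·F_0 (mod X·Λ); equivalently, F^♯(0) = F_0(0) and F^♭(0) = F_1(0) − a·F_0(0) in O_L. -/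
open PowerSeries

/-!
Only the congruences for `m = 1` are needed. There `H_1 = C_1` and `ω_1 = Φ_1 · X`, where
`Φ_1(0) = p ≠ 0`, so `Φ_1` is a non-zero-divisor of `Λ`. The second row,
`Φ_1 · (F_0 − F^♯) ≡ 0 (mod Φ_1 · X)`, gives `F^♯ ≡ F_0 (mod X)` after cancelling `Φ_1`;
the first row, `a·F^♯ + F^♭ ≡ F_1 (mod X)`, then gives `F^♭ ≡ F_1 − a·F_0 (mod X)`.
-/

section

variable (p : ℕ) (R : Type*) [CommRing R]

theorem omegaPS_one : omegaPS p R 1 = PhiPS p R 1 * X := by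
  simp only [omegaPS, PhiPS, pow_one, tsub_self, pow_zero, mul_one]
  rw [← geom_sum_mul (1 + X : PowerSeries R) p, add_sub_cancel_left]

theorem constantCoeff_PhiPS (m : ℕ) : constantCoeff (PhiPS p R m) = p := by
  simp [PhiPS, map_sum]

theorem PhiPS_ne_zero [CharZero R] (hp : p ≠ 0) (m : ℕ) : PhiPS p R m ≠ 0 := fun h => by
  simpa [h, eq_comm, hp] using constantCoeff_PhiPS p R m

theorem omegaPS_one_dvd_PhiPS_one_mul_iff [IsDomain R] [CharZero R] (hp : p ≠ 0)
    (f : PowerSeries R) : omegaPS p R 1 ∣ PhiPS p R 1 * f ↔ X ∣ f := by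
  rw [omegaPS_one, mul_dvd_mul_iff_left (PhiPS_ne_zero p R hp 1)]

theorem Hmat_one_mulVec (a : R) (u v : PowerSeries R) :
    (Hmat p R a 1).mulVec ![u, v] = ![C a * u + v, -(PhiPS p R 1 * u)] := by
  ext i
  fin_cases i <;> simp [Hmat, Cmat, Matrix.mulVec, dotProduct, Fin.sum_univ_two]

end

theorem constantCoeff_eq_of_X_dvd_sub {R : Type*} [CommRing R] {f g : PowerSeries R}
    (h : X ∣ f - g) : constantCoeff f = constantCoeff g := by
  rwa [X_dvd_iff, map_sub, sub_eq_zero] at h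

theorem sharp_flat_evaluation_at_zero_general
    (p : ℕ) (hp : p.Prime)
    (𝕆 : Type*) [CommRing 𝕆] [IsDomain 𝕆] [CharZero 𝕆]
    (a : 𝕆) (F : ℕ → PowerSeries 𝕆)
    (Fs Fb : PowerSeries 𝕆)
    (hsharp : ∀ m : ℕ, 1 ≤ m → ∀ i : Fin 2,
      omegaPS p 𝕆 m ∣
        ((Hmat p 𝕆 a m).mulVec ![Fs, Fb] i - ![F m, -(PhiPS p 𝕆 m * F (m - 1))] i)) :
    ((PowerSeries.X : PowerSeries 𝕆) ∣ (Fs - F 0) ∧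
      (PowerSeries.X : PowerSeries 𝕆) ∣ (Fb - (F 1 - PowerSeries.C a * F 0))) ∧
    (PowerSeries.constantCoeff Fs = PowerSeries.constantCoeff (F 0) ∧
      PowerSeries.constantCoeff Fb =
        PowerSeries.constantCoeff (F 1) - a * PowerSeries.constantCoeff (F 0)) := by
  have hrow₀ := hsharp 1 le_rfl 0
  have hrow₁ := hsharp 1 le_rfl 1
  simp only [Hmat_one_mulVec, Matrix.cons_val_zero, Matrix.cons_val_one, tsub_self] at hrow₀ hrow₁
  have hs : X ∣ Fs - F 0 := by
    rwa [← omegaPS_one_dvd_PhiPS_one_mul_iff p 𝕆 hp.ne_zero, mul_sub, dvd_sub_comm,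
      ← neg_sub_neg]
  have hb : X ∣ Fb - (F 1 - C a * F 0) := by
    have hX : X ∣ C a * Fs + Fb - F 1 :=
      (dvd_mul_left X (PhiPS p 𝕆 1)).trans (omegaPS_one p 𝕆 ▸ hrow₀)
    convert hX.sub (hs.mul_left (C a)) using 1
    ring
  refine ⟨⟨hs, hb⟩, constantCoeff_eq_of_X_dvd_sub hs, ?_⟩
  simpa only [map_sub, map_mul, constantCoeff_C] using constantCoeff_eq_of_X_dvd_sub hb

/-- from the proof of Proposition 4.9 of the paper: if `ϖ ∣ a`,
`(F_m)` is norm-compatible for `a`, and `(F^♯, F^♭)` is the pair attached by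
Theorem 3.3 (i.e. `H_m·(F^♯,F^♭)ᵀ ≡ (F_m, −Φ_m·F_{m−1})ᵀ (mod ω_m·Λ)` for all
`m ≥ 1`), then `F^♯ ≡ F_0 (mod X·Λ)` and `F^♭ ≡ F_1 − a·F_0 (mod X·Λ)`;
equivalently `F^♯(0) = F_0(0)` and `F^♭(0) = F_1(0) − a·F_0(0)` in `𝕆`. -/
theorem sharp_flat_evaluation_at_zero
    (p : ℕ) (hp : p.Prime) (hp5 : 5 ≤ p)
    (𝕆 : Type*) [CommRing 𝕆] [IsDomain 𝕆] [IsDiscreteValuationRing 𝕆] [CharZero 𝕆]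
    (ϖ : 𝕆) (hϖ : Irreducible ϖ) (hpϖ : ϖ ∣ (p : 𝕆))
    (a : 𝕆) (ha : ϖ ∣ a) (F : ℕ → PowerSeries 𝕆) (hF : NormCompat p 𝕆 a F)
    (Fs Fb : PowerSeries 𝕆)
    (hsharp : ∀ m : ℕ, 1 ≤ m → ∀ i : Fin 2,
      omegaPS p 𝕆 m ∣
        ((Hmat p 𝕆 a m).mulVec ![Fs, Fb] i - ![F m, -(PhiPS p 𝕆 m * F (m - 1))] i)) :
    ((PowerSeries.X : PowerSeries 𝕆) ∣ (Fs - F 0) ∧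
      (PowerSeries.X : PowerSeries 𝕆) ∣ (Fb - (F 1 - PowerSeries.C a * F 0))) ∧
    (PowerSeries.constantCoeff Fs = PowerSeries.constantCoeff (F 0) ∧
      PowerSeries.constantCoeff Fb =
        PowerSeries.constantCoeff (F 1) - a * PowerSeries.constantCoeff (F 0)) :=
  sharp_flat_evaluation_at_zero_general p hp 𝕆 a F Fs Fb hsharp
end

section
/- (The p-stabilization compatibility asserted in §3.3 of the paper.) Let a ∈ O_L, let E be a field extension of L, and let λ ∈ E be a root of x² − a·x + p (note λ ≠ 0 since p ≠ 0). Let (F_m)_{m≥0} be a sequence in Λ that is norm-compatible for a, and for m ≥ 1 define the λ-stabilization F_m^λ := λ^{−(m+1)}·(F_m − λ^{−1}·Φ_m·F_{m−1}) ∈ E[[X]]. Then F_{m+1}^λ ≡ F_m^λ (mod ω_m·E[[X]]) for every m ≥ 1. -/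
/-!
Setting: `p ≥ 5` a prime, `𝕆` the ring of integers of a finite extension `L` of
`ℚ_p` (modelled as a characteristic-zero discrete valuation ring) with uniformizer
`ϖ` satisfying `ϖ ∣ p`, `Λ = 𝕆⟦X⟧`, and `E` a field extension of `L` (modelled as a
field equipped with an injective algebra map from `𝕆`).
-/

open PowerSeries

/-- The `λ`-stabilization `F_m^λ = λ^{−(m+1)}·(F_m − λ^{−1}·Φ_m·F_{m−1}) ∈ E⟦X⟧`
(for `m ≥ 1`). -/
noncomputable def lambdaStab (p : ℕ) (𝕆 E : Type*) [CommRing 𝕆] [Field E] [Algebra 𝕆 E]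
    (lam : E) (F : ℕ → PowerSeries 𝕆) (m : ℕ) : PowerSeries E :=
  PowerSeries.C (lam⁻¹ ^ (m + 1)) *
    ((F m).map (algebraMap 𝕆 E) -
      PowerSeries.C lam⁻¹ * (PhiPS p E m * (F (m - 1)).map (algebraMap 𝕆 E)))

lemma omegaPS_map {R S : Type*} [CommRing R] [CommRing S] (f : R →+* S) (p m : ℕ) :
    PowerSeries.map f (omegaPS p R m) = omegaPS p S m := by
  simp [omegaPS]

lemma PhiPS_map {R S : Type*} [CommRing R] [CommRing S] (f : R →+* S) (p m : ℕ) :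
    PowerSeries.map f (PhiPS p R m) = PhiPS p S m := by
  simp [PhiPS]

/-- Each of the `p` summands `((1+X)^{p^m})^i` of `Φ_{m+1}` is `≡ 1 (mod ω_m)`. -/
lemma omegaPS_dvd_PhiPS_succ_sub_natCast (p : ℕ) (R : Type*) [CommRing R] (m : ℕ) :
    omegaPS p R m ∣ PhiPS p R (m + 1) - (p : PowerSeries R) := by
  have hp : (p : PowerSeries R) = ∑ _i ∈ Finset.range p, 1 := by simp
  rw [PhiPS, hp, Nat.add_sub_cancel, ← Finset.sum_sub_distrib]
  refine Finset.dvd_sum fun i _ => ?_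
  rw [mul_comm, pow_mul, omegaPS]
  simpa using sub_dvd_pow_sub_pow ((1 + X : PowerSeries R) ^ p ^ m) 1 i

lemma NormCompat.map {p : ℕ} {R S : Type*} [CommRing R] [CommRing S] {a : R}
    {F : ℕ → PowerSeries R} (hF : NormCompat p R a F) (f : R →+* S) :
    NormCompat p S (f a) (fun m => (F m).map f) := by
  intro m hm
  simpa [omegaPS_map, PhiPS_map] using map_dvd (PowerSeries.map f) (hF m hm)

/-- Multiplying `λ² − aλ + p = 0` by `λ⁻³`; the identity also holds for `λ = 0`. -/
lemma inv_eq_mul_inv_sq_sub_mul_inv_pow_three {K : Type*} [Field K] {a p lam : K}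
    (hlam : lam ^ 2 - a * lam + p = 0) : lam⁻¹ = a * lam⁻¹ ^ 2 - p * lam⁻¹ ^ 3 := by
  rcases eq_or_ne lam 0 with rfl | hlam0
  · simp
  · field_simp
    linear_combination hlam

/-- The congruence `F_{m+1}^λ ≡ F_m^λ (mod ω_m)` with `c = λ⁻¹`: substituting `hf` and `hΦ`
leaves `c^{n+1}·f₁·(ac − pc² − 1)`, which `hc` kills. -/
lemma dvd_stab_succ_sub_stab {R : Type*} [CommRing R] {ω a p c Φ Φ' f₀ f₁ f₂ : R} (n : ℕ)
    (hf : ω ∣ f₂ - (a * f₁ - Φ * f₀)) (hΦ : ω ∣ Φ' - p) (hc : c = a * c ^ 2 - p * c ^ 3) :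
    ω ∣ c ^ (n + 2) * (f₂ - c * (Φ' * f₁)) - c ^ (n + 1) * (f₁ - c * (Φ * f₀)) := by
  obtain ⟨g, hg⟩ := hf
  obtain ⟨h, hh⟩ := hΦ
  exact ⟨c ^ (n + 2) * (g - c * h * f₁), by
    linear_combination c ^ (n + 2) * hg - c ^ (n + 3) * f₁ * hh - c ^ n * f₁ * hc⟩

theorem lambda_stabilization_compatible_general
    (p : ℕ)
    (𝕆 : Type*) [CommRing 𝕆]
    (E : Type*) [Field E] [Algebra 𝕆 E]
    (a : 𝕆) (lam : E)
    (hlam : lam ^ 2 - algebraMap 𝕆 E a * lam + (p : E) = 0)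
    (F : ℕ → PowerSeries 𝕆) (hF : NormCompat p 𝕆 a F) :
    ∀ m : ℕ, 1 ≤ m →
      omegaPS p E m ∣ (lambdaStab p 𝕆 E lam F (m + 1) - lambdaStab p 𝕆 E lam F m) := by
  intro m hm
  have hc := congrArg C (inv_eq_mul_inv_sq_sub_mul_inv_pow_three hlam)
  simp only [map_sub, map_mul, map_pow, map_natCast] at hc
  simp only [lambdaStab, map_pow, Nat.add_sub_cancel]
  exact dvd_stab_succ_sub_stab m ((hF.map (algebraMap 𝕆 E)) m hm)
    (omegaPS_dvd_PhiPS_succ_sub_natCast p E m) hc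

/-- the `p`-stabilization compatibility asserted in §3.3 of the
paper: if `λ ∈ E` is a root of `x² − a·x + p` and `(F_m)` is norm-compatible for
`a`, then `F_{m+1}^λ ≡ F_m^λ (mod ω_m·E⟦X⟧)` for every `m ≥ 1`. -/
theorem lambda_stabilization_compatible
    (p : ℕ) (hp : p.Prime) (hp5 : 5 ≤ p)
    (𝕆 : Type*) [CommRing 𝕆] [IsDomain 𝕆] [IsDiscreteValuationRing 𝕆] [CharZero 𝕆]
    (ϖ : 𝕆) (hϖ : Irreducible ϖ) (hpϖ : ϖ ∣ (p : 𝕆))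
    (E : Type*) [Field E] [Algebra 𝕆 E]
    (hinj : Function.Injective (algebraMap 𝕆 E))
    (a : 𝕆) (lam : E)
    (hlam : lam ^ 2 - algebraMap 𝕆 E a * lam + (p : E) = 0)
    (F : ℕ → PowerSeries 𝕆) (hF : NormCompat p 𝕆 a F) :
    ∀ m : ℕ, 1 ≤ m →
      omegaPS p E m ∣ (lambdaStab p 𝕆 E lam F (m + 1) - lambdaStab p 𝕆 E lam F m) :=
  lambda_stabilization_compatible_general p 𝕆 E a lam hlam F hF
end
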